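/- Even with dependent input variables, every total Sobol' index is bounded: for every nonempty u ⊆ {1,…,p}, 0 ≤ T_u ≤ 1 (while individual Sobol' indices S_v may be negative). -/

import Mathlib

open MeasureTheory ProbabilityTheory

/-- The sub-σ-algebra generated by the coordinates in `v`. -/
def coordSigma {p : ℕ} (Ω : Fin p → Type*) [∀ i, MeasurableSpace (Ω i)]
    (v : Finset (Fin p)) : MeasurableSpace (∀ i, Ω i) :=
  ⨆ i ∈ v, MeasurableSpace.comap (fun x : ∀ j, Ω j => x i) inferInstance

/-- The recursively defined (generalized ANOVA) components `f_v`. -/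
noncomputable def anovaComp {p : ℕ} {Ω : Fin p → Type*} [∀ i, MeasurableSpace (Ω i)]
    (μ : Measure (∀ i, Ω i)) (f : (∀ i, Ω i) → ℝ) : Finset (Fin p) → (∀ i, Ω i) → ℝ
  | v =>
    if v = ∅ then fun _ => ∫ x, f x ∂μ
    else μ[f | coordSigma Ω v] - ∑ w ∈ v.ssubsets.attach, anovaComp μ f w.1
  termination_by v => v.card
  decreasing_by exact Finset.card_lt_card (Finset.mem_ssubsets.mp w.2)

/-- Variance (`‖f - f₀‖₂²`). -/
noncomputable def fVar {α : Type*} [MeasurableSpace α] (μ : Measure α) (f : α → ℝ) : ℝ :=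
  ∫ x, (f x - ∫ y, f y ∂μ) ^ 2 ∂μ

/-- Covariance. -/
noncomputable def fCov {α : Type*} [MeasurableSpace α] (μ : Measure α) (g f : α → ℝ) : ℝ :=
  ∫ x, (g x - ∫ y, g y ∂μ) * (f x - ∫ y, f y ∂μ) ∂μ

/-- Sobol' index `S_v`. -/
noncomputable def sobolIndex {p : ℕ} {Ω : Fin p → Type*} [∀ i, MeasurableSpace (Ω i)]
    (μ : Measure (∀ i, Ω i)) (f : (∀ i, Ω i) → ℝ) (v : Finset (Fin p)) : ℝ :=
  fCov μ (anovaComp μ f v) f / fVar μ f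

/-- Total Sobol' index `T_u`. -/
noncomputable def totalSobolIndex {p : ℕ} {Ω : Fin p → Type*} [∀ i, MeasurableSpace (Ω i)]
    (μ : Measure (∀ i, Ω i)) (f : (∀ i, Ω i) → ℝ) (u : Finset (Fin p)) : ℝ :=
  ∑ v ∈ Finset.univ.powerset.filter (fun v => (v ∩ u).Nonempty), sobolIndex μ f v

/-! Summing the components over the subsets of `v` telescopes to `E[f | x_v]`, so the indices
`S_v` with `v ∩ u = ∅`, i.e. `v ⊆ ∼u`, add up to `Cov(E[f | x_∼u], f) / Var f`. By the pull-out
property this covariance is `Var E[f | x_∼u]`, hence `T_u = 1 - Var E[f | x_∼u] / Var f`, and the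
law of total variance gives `0 ≤ Var E[f | x_∼u] ≤ Var f`. -/

section ConditionalExpectation

variable {α : Type*} {m m₀ : MeasurableSpace α} {μ : Measure[m₀] α} [IsProbabilityMeasure μ]
  {f : α → ℝ}

lemma covariance_condExp_left (hm : m ≤ m₀) (hf : MemLp f 2 μ) :
    cov[μ[f|m], f; μ] = Var[μ[f|m]; μ] := by
  have hg : MemLp (μ[f|m]) 2 μ := hf.condExp one_le_two
  have hpull : μ[μ[f|m] * f|m] =ᵐ[μ] μ[f|m] * μ[f|m] :=
    condExp_mul_of_stronglyMeasurable_left stronglyMeasurable_condExp (hg.integrable_mul hf)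
      (hf.integrable one_le_two)
  have hmul : μ[μ[f|m] * f] = μ[μ[f|m] * μ[f|m]] :=
    (integral_condExp hm).symm.trans (integral_congr_ae hpull)
  rw [covariance_eq_sub hg hf, ← covariance_self hg.aemeasurable, covariance_eq_sub hg hg, hmul,
    integral_condExp hm]

lemma variance_condExp_le (hm : m ≤ m₀) (hf : MemLp f 2 μ) : Var[μ[f|m]; μ] ≤ Var[f; μ] := by
  have hcondVar : 0 ≤ μ[Var[f; μ | m]] := by
    rw [condVar, integral_condExp hm]
    exact integral_nonneg fun x => sq_nonneg ((f - μ[f|m]) x)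
  linarith [integral_condVar_add_variance_condExp hm hf]

end ConditionalExpectation

lemma Finset.filter_powerset_univ_not_inter_nonempty {ι : Type*} [Fintype ι] [DecidableEq ι]
    (u : Finset ι) : univ.powerset.filter (fun v => ¬ (v ∩ u).Nonempty) = uᶜ.powerset := by
  ext v
  simp [not_nonempty_iff_eq_empty, ← disjoint_iff_inter_eq_empty, subset_compl_iff_disjoint_right]

lemma fCov_eq_covariance {α : Type*} [MeasurableSpace α] (μ : Measure α) (g f : α → ℝ) :
    fCov μ g f = cov[g, f; μ] :=
  rfl

lemma fVar_eq_variance {α : Type*} [MeasurableSpace α] {μ : Measure α} {f : α → ℝ}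
    (hf : AEMeasurable f μ) : fVar μ f = Var[f; μ] :=
  (variance_eq_integral hf).symm

section ANOVA

variable {p : ℕ} {Ω : Fin p → Type*} [∀ i, MeasurableSpace (Ω i)]

lemma coordSigma_le (v : Finset (Fin p)) : coordSigma Ω v ≤ MeasurableSpace.pi :=
  iSup₂_le fun i _ => (measurable_pi_apply i).comap_le

lemma coordSigma_empty : coordSigma Ω ∅ = ⊥ := by
  simp [coordSigma]

lemma coordSigma_univ : coordSigma Ω Finset.univ = MeasurableSpace.pi := by
  simp [coordSigma, MeasurableSpace.pi]

variable {μ : Measure (∀ i, Ω i)} [IsProbabilityMeasure μ] {f : (∀ i, Ω i) → ℝ}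

lemma sum_powerset_anovaComp (v : Finset (Fin p)) :
    ∑ w ∈ v.powerset, anovaComp μ f w = μ[f|coordSigma Ω v] := by
  rcases v.eq_empty_or_nonempty with rfl | hv
  · rw [Finset.powerset_empty, Finset.sum_singleton, coordSigma_empty, condExp_bot, anovaComp,
      if_pos rfl]
  · have hvv : v ∉ v.ssubsets := by simp [Finset.ssubsets]
    rw [← Finset.insert_erase (Finset.mem_powerset_self v), ← Finset.ssubsets,
      Finset.sum_insert hvv, anovaComp, if_neg hv.ne_empty,
      Finset.sum_attach v.ssubsets (fun w => anovaComp μ f w), sub_add_cancel]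

lemma memLp_anovaComp (hf : MemLp f 2 μ) (v : Finset (Fin p)) : MemLp (anovaComp μ f v) 2 μ := by
  induction v using Finset.strongInduction with
  | _ v ih =>
    rw [anovaComp]
    split_ifs
    · exact memLp_const _
    · exact (hf.condExp one_le_two).sub
        (memLp_finsetSum' _ fun w _ => ih w.1 (Finset.mem_ssubsets.mp w.2))

lemma sum_powerset_covariance_anovaComp (hf : MemLp f 2 μ) (v : Finset (Fin p)) :
    ∑ w ∈ v.powerset, cov[anovaComp μ f w, f; μ] = Var[μ[f|coordSigma Ω v]; μ] := by
  rw [← covariance_sum_left' (fun w _ => memLp_anovaComp hf w) hf, sum_powerset_anovaComp,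
    covariance_condExp_left (coordSigma_le v) hf]

lemma sum_covariance_anovaComp (hf : MemLp f 2 μ) :
    ∑ v ∈ Finset.univ.powerset, cov[anovaComp μ f v, f; μ] = Var[f; μ] := by
  rw [sum_powerset_covariance_anovaComp hf, coordSigma_univ]
  exact variance_congr (condExp_of_aestronglyMeasurable' le_rfl hf.1 (hf.integrable one_le_two))

lemma totalSobolIndex_eq (hf : MemLp f 2 μ) (u : Finset (Fin p)) :
    totalSobolIndex μ f u = (Var[f; μ] - Var[μ[f|coordSigma Ω uᶜ]; μ]) / Var[f; μ] := by
  have hsplit := Finset.sum_filter_add_sum_filter_not Finset.univ.powerset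
    (fun v => (v ∩ u).Nonempty) (fun v => cov[anovaComp μ f v, f; μ])
  rw [Finset.filter_powerset_univ_not_inter_nonempty, sum_powerset_covariance_anovaComp hf,
    sum_covariance_anovaComp hf] at hsplit
  simp only [totalSobolIndex, sobolIndex, fCov_eq_covariance, fVar_eq_variance hf.aemeasurable,
    ← Finset.sum_div]
  rw [← hsplit, add_sub_cancel_right]

end ANOVA

theorem totalSobolIndex_nonneg_le_one_general
    {p : ℕ} (Ω : Fin p → Type*) [∀ i, MeasurableSpace (Ω i)]
    (μ : Measure (∀ i, Ω i)) [IsProbabilityMeasure μ]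
    (f : (∀ i, Ω i) → ℝ) (hf : MemLp f 2 μ)
    (hvar : 0 < fVar μ f)
    (u : Finset (Fin p)) :
    0 ≤ totalSobolIndex μ f u ∧ totalSobolIndex μ f u ≤ 1 := by
  rw [fVar_eq_variance hf.aemeasurable] at hvar
  have hlower := variance_nonneg (μ[f|coordSigma Ω uᶜ]) μ
  have hupper := variance_condExp_le (coordSigma_le uᶜ) hf
  rw [totalSobolIndex_eq hf u]
  exact ⟨div_nonneg (by linarith) hvar.le, (div_le_one hvar).2 (by linarith)⟩

/-- Even with dependent input variables, every total Sobol' index satisfies `0 ≤ T_u ≤ 1`. -/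
theorem totalSobolIndex_nonneg_le_one
    {p : ℕ} (hp : 1 ≤ p) (Ω : Fin p → Type*) [∀ i, MeasurableSpace (Ω i)]
    (μ : Measure (∀ i, Ω i)) [IsProbabilityMeasure μ]
    (f : (∀ i, Ω i) → ℝ) (hf : MemLp f 2 μ)
    (hvar : 0 < fVar μ f)
    (u : Finset (Fin p)) (hu : u.Nonempty) :
    0 ≤ totalSobolIndex μ f u ∧ totalSobolIndex μ f u ≤ 1 :=
  totalSobolIndex_nonneg_le_one_general Ω μ f hf hvar u
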